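/- Teleportation lower bound: Under Assumption 1 (μ = Σ μ_j with disjoint supports A_j, ν neutral supported in supp(μ)), liminf_{ε→0} ε^{-1/p} W_p(μ + εν₊, μ + εν₋) ≥ ‖ν‖_μ^{1/p}, where ‖ν‖_μ is the optimal transport cost of the charges ν̄_i = ν(A_i) on the graph with vertex distances |Ē|_{ij} given by the geodesic distance induced by edge lengths dist(A_i, A_j)^p. -/

import Mathlib

open MeasureTheory ENNReal NNReal

/-- The `p`-Wasserstein cost `W_p^p(μ₁,μ₂)`: Kantorovich infimum over couplings of
`∫∫ |x-y|^p dπ`. -/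
noncomputable def WpCost {E : Type*} [MeasurableSpace E] [PseudoMetricSpace E]
    (p : ℝ) (μ₁ μ₂ : Measure E) : ℝ≥0∞ :=
  ⨅ (π : Measure (E × E)) (_ : π.map Prod.fst = μ₁ ∧ π.map Prod.snd = μ₂),
    ∫⁻ z, ENNReal.ofReal (dist z.1 z.2 ^ p) ∂π

/-- The `p`-Wasserstein metric `W_p(μ₁,μ₂) = (W_p^p)^{1/p}`. -/
noncomputable def Wp {E : Type*} [MeasurableSpace E] [PseudoMetricSpace E]
    (p : ℝ) (μ₁ μ₂ : Measure E) : ℝ≥0∞ :=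
  WpCost p μ₁ μ₂ ^ (1 / p)

/-- Distance between two sets. -/
noncomputable def setDist {E : Type*} [PseudoMetricSpace E] (A B : Set E) : ℝ :=
  sInf ((fun q : E × E => dist q.1 q.2) '' (A ×ˢ B))

/-- Shortest-path distance induced on `Fin m` by edge weights `w`. -/
noncomputable def geodist {m : ℕ} (w : Fin m → Fin m → ℝ) (i j : Fin m) : ℝ :=
  sInf {c : ℝ | ∃ n : ℕ, ∃ f : Fin (n + 1) → Fin m, f 0 = i ∧ f (Fin.last n) = j ∧
    c = ∑ l : Fin n, w (f l.castSucc) (f l.succ)}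

/-
A coupling `π` of `μ + εν₊` and `μ + εν₋` moves the mass `π(Aᵢ × Aⱼ)` from component `i` to
component `j`. Divided by `ε` this is a flow on the components whose divergence is `ν̄` (the common
part `μ` cancels) and whose cost for the edge lengths `dist(Aᵢ, Aⱼ)^p` is at most
`ε⁻¹ ∫ |x - y|^p dπ`. The geodesic distance `|Ē|` lies below the edge lengths and satisfies the
triangle inequality, so a component that both receives and emits mass can be bypassed: forwarding
its incoming mass straight to its targets keeps the divergence and does not increase the
`|Ē|`-cost. Once every component is bypassed, mass only flows from `{ν̄ > 0}` to `{ν̄ < 0}`, so the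
flow is a transport plan for `ν̄` and costs at least `‖ν‖_μ`. Hence `W_p^p ≥ ε ‖ν‖_μ` for all
`ε > 0`.
-/

open Finset

lemma le_csInf_add_csInf {s t : Set ℝ} (hs : s.Nonempty) (ht : t.Nonempty) {a : ℝ}
    (h : ∀ x ∈ s, ∀ y ∈ t, a ≤ x + y) : a ≤ sInf s + sInf t := by
  have hs' : ∀ x ∈ s, a - x ≤ sInf t := fun x hx => le_csInf ht fun y hy => by
    linarith [h x hx y hy]
  have : a - sInf t ≤ sInf s := le_csInf hs fun x hx => by linarith [hs' x hx]
  linarith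

section Geodist

variable {m : ℕ} {w : Fin m → Fin m → ℝ}

def pathLengths (w : Fin m → Fin m → ℝ) (i j : Fin m) : Set ℝ :=
  {c : ℝ | ∃ n : ℕ, ∃ f : Fin (n + 1) → Fin m, f 0 = i ∧ f (Fin.last n) = j ∧
    c = ∑ l : Fin n, w (f l.castSucc) (f l.succ)}

lemma sum_range_mem_pathLengths (f : ℕ → Fin m) (n : ℕ) :
    ∑ l ∈ range n, w (f l) (f (l + 1)) ∈ pathLengths w (f 0) (f n) :=
  ⟨n, fun l => f l, rfl, rfl, (Fin.sum_univ_eq_sum_range (fun l => w (f l) (f (l + 1))) n).symm⟩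

open Fin.NatCast in
lemma exists_seq_of_mem_pathLengths {i j : Fin m} {c : ℝ} (hc : c ∈ pathLengths w i j) :
    ∃ n, ∃ f : ℕ → Fin m, f 0 = i ∧ f n = j ∧ c = ∑ l ∈ range n, w (f l) (f (l + 1)) := by
  obtain ⟨n, f, rfl, rfl, rfl⟩ := hc
  refine ⟨n, fun l => f (l : Fin (n + 1)), by simp, by simp, ?_⟩
  rw [← Fin.sum_univ_eq_sum_range (fun l => w (f l) (f (l + 1 : ℕ)))]
  simp

lemma pathLengths_nonneg (hw : ∀ i j, 0 ≤ w i j) {i j : Fin m} :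
    ∀ c ∈ pathLengths w i j, 0 ≤ c := by
  rintro c ⟨n, f, -, -, rfl⟩
  exact sum_nonneg fun l _ => hw _ _

lemma bddBelow_pathLengths (hw : ∀ i j, 0 ≤ w i j) (i j : Fin m) :
    BddBelow (pathLengths w i j) :=
  ⟨0, pathLengths_nonneg hw⟩

lemma apply_mem_pathLengths (i j : Fin m) : w i j ∈ pathLengths w i j := by
  simpa using sum_range_mem_pathLengths (w := w) (fun l => if l = 0 then i else j) 1

lemma add_mem_pathLengths {i b j : Fin m} {c₁ c₂ : ℝ} (hc₁ : c₁ ∈ pathLengths w i b)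
    (hc₂ : c₂ ∈ pathLengths w b j) : c₁ + c₂ ∈ pathLengths w i j := by
  obtain ⟨n₁, f₁, rfl, hf₁, rfl⟩ := exists_seq_of_mem_pathLengths hc₁
  obtain ⟨n₂, f₂, hf₂, rfl, rfl⟩ := exists_seq_of_mem_pathLengths hc₂
  let f : ℕ → Fin m := fun l => if l ≤ n₁ then f₁ l else f₂ (l - n₁)
  have hf : ∀ l, f (n₁ + l) = f₂ l := by
    rintro (_ | l)
    · simp [f, hf₁, hf₂]
    · simp [f]
  have hsum := sum_range_mem_pathLengths (w := w) f (n₁ + n₂)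
  rw [hf, sum_range_add] at hsum
  convert hsum using 2
  · simp [f]
  · exact sum_congr rfl fun l hl => by
      have := mem_range.mp hl
      simp [f, this.le, Nat.succ_le_of_lt this]
  · simp only [add_assoc, hf]

lemma geodist_nonneg (hw : ∀ i j, 0 ≤ w i j) (i j : Fin m) : 0 ≤ geodist w i j :=
  le_csInf ⟨w i j, apply_mem_pathLengths i j⟩ (pathLengths_nonneg hw)

lemma geodist_le (hw : ∀ i j, 0 ≤ w i j) (i j : Fin m) : geodist w i j ≤ w i j :=
  csInf_le (bddBelow_pathLengths hw i j) (apply_mem_pathLengths i j)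

lemma geodist_triangle (hw : ∀ i j, 0 ≤ w i j) (i b j : Fin m) :
    geodist w i j ≤ geodist w i b + geodist w b j :=
  le_csInf_add_csInf ⟨_, apply_mem_pathLengths i b⟩ ⟨_, apply_mem_pathLengths b j⟩
    fun _ h₁ _ h₂ => csInf_le (bddBelow_pathLengths hw i j) (add_mem_pathLengths h₁ h₂)

end Geodist

section Flow

variable {ι : Type*} [Fintype ι]

def outflow (f : ι → ι → ℝ) (i : ι) : ℝ := ∑ j, f i j

def inflow (f : ι → ι → ℝ) (j : ι) : ℝ := ∑ i, f i j

def divergence (f : ι → ι → ℝ) (i : ι) : ℝ := outflow f i - inflow f i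

def flowCost (g f : ι → ι → ℝ) : ℝ := ∑ i, ∑ j, f i j * g i j

lemma divergence_transpose (f : ι → ι → ℝ) :
    divergence (fun x y => f y x) = -divergence f := by
  ext v
  exact (neg_sub _ _).symm

lemma flowCost_transpose (g f : ι → ι → ℝ) :
    flowCost (fun x y => g y x) (fun x y => f y x) = flowCost g f :=
  sum_comm

lemma divergence_div_const (f : ι → ι → ℝ) (c : ℝ) (i : ι) :
    divergence (fun i j => f i j / c) i = divergence f i / c := by
  simp only [divergence, outflow, inflow, sum_div, _root_.sub_div]

lemma flowCost_div_const (g f : ι → ι → ℝ) (c : ℝ) :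
    flowCost g (fun i j => f i j / c) = flowCost g f / c := by
  simp only [flowCost, sum_div, div_mul_eq_mul_div]

variable {g f : ι → ι → ℝ} {b : ι}

def IsTransportPlan (ν : ι → ℝ) (l : ι → ι → ℝ) : Prop :=
  (∀ i j, 0 ≤ l i j) ∧
    (∀ i, 0 < ν i → ∑ j ∈ univ.filter (fun j => ν j < 0), l i j = ν i) ∧
    (∀ j, ν j < 0 → ∑ i ∈ univ.filter (fun i => 0 < ν i), l i j = -ν j)

noncomputable def planCost (ν : ι → ℝ) (g l : ι → ι → ℝ) : ℝ :=
  ∑ i ∈ univ.filter (fun i => 0 < ν i), ∑ j ∈ univ.filter (fun j => ν j < 0), l i j * g i j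

lemma planCost_nonneg {ν : ι → ℝ} {l : ι → ι → ℝ} (hl : IsTransportPlan ν l)
    (hg : ∀ i j, 0 ≤ g i j) : 0 ≤ planCost ν g l :=
  sum_nonneg fun i _ => sum_nonneg fun j _ => mul_nonneg (hl.1 i j) (hg i j)

noncomputable def transportCost (ν : ι → ℝ) (g : ι → ι → ℝ) : ℝ :=
  sInf {c | ∃ l, IsTransportPlan ν l ∧ c = planCost ν g l}

lemma transportCost_le_planCost {ν : ι → ℝ} {l : ι → ι → ℝ} (hg : ∀ i j, 0 ≤ g i j)
    (hl : IsTransportPlan ν l) : transportCost ν g ≤ planCost ν g l :=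
  csInf_le ⟨0, by rintro _ ⟨l', hl', rfl⟩; exact planCost_nonneg hl' hg⟩ ⟨l, hl, rfl⟩

lemma flowCost_mono {g' : ι → ι → ℝ} (hg : ∀ i j, g i j ≤ g' i j) (hf : ∀ i j, 0 ≤ f i j) :
    flowCost g f ≤ flowCost g' f :=
  sum_le_sum fun i _ => sum_le_sum fun j _ => mul_le_mul_of_nonneg_left (hg i j) (hf i j)

def IsSourceOrSink (f : ι → ι → ℝ) (v : ι) : Prop := inflow f v = 0 ∨ outflow f v = 0

lemma divergence_pos_and_neg_of_ne_zero (hf : ∀ x y, 0 ≤ f x y)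
    (hv : ∀ v, IsSourceOrSink f v) {i j : ι} (hij : f i j ≠ 0) :
    0 < divergence f i ∧ divergence f j < 0 := by
  have hpos : 0 < f i j := (hf i j).lt_of_ne' hij
  have hout : 0 < outflow f i := hpos.trans_le (single_le_sum (fun y _ => hf i y) (mem_univ j))
  have hin : 0 < inflow f j := hpos.trans_le (single_le_sum (fun x _ => hf x j) (mem_univ i))
  simp only [divergence, (hv i).resolve_right hout.ne', (hv j).resolve_left hin.ne']
  constructor <;> linarith

theorem isTransportPlan_of_forall_isSourceOrSink (hf : ∀ x y, 0 ≤ f x y)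
    (hv : ∀ v, IsSourceOrSink f v) :
    IsTransportPlan (divergence f) f ∧ planCost (divergence f) g f = flowCost g f := by
  have hsupp : ∀ i j, f i j ≠ 0 → 0 < divergence f i ∧ divergence f j < 0 :=
    fun i j => divergence_pos_and_neg_of_ne_zero hf hv
  have hrow : ∀ i, ∑ j ∈ univ.filter (fun j => divergence f j < 0), f i j = outflow f i :=
    fun i => sum_subset (filter_subset _ _) fun j _ hj => by_contra fun hij =>
      hj (mem_filter.mpr ⟨mem_univ j, (hsupp i j hij).2⟩)
  have hcol : ∀ j, ∑ i ∈ univ.filter (fun i => 0 < divergence f i), f i j = inflow f j :=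
    fun j => sum_subset (filter_subset _ _) fun i _ hi => by_contra fun hij =>
      hi (mem_filter.mpr ⟨mem_univ i, (hsupp i j hij).1⟩)
  have hsource : ∀ i, 0 < divergence f i → inflow f i = 0 := fun i hi =>
    (hv i).resolve_right fun h => by
      have : 0 ≤ inflow f i := sum_nonneg fun x _ => hf x i
      rw [divergence, h] at hi
      linarith
  have hsink : ∀ j, divergence f j < 0 → outflow f j = 0 := fun j hj =>
    (hv j).resolve_left fun h => by
      have : 0 ≤ outflow f j := sum_nonneg fun y _ => hf j y
      rw [divergence, h] at hj
      linarith
  refine ⟨⟨hf, fun i hi => ?_, fun j hj => ?_⟩, ?_⟩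
  · rw [hrow, divergence, hsource i hi, sub_zero]
  · rw [hcol, divergence, hsink j hj, zero_sub, neg_neg]
  · calc planCost (divergence f) g f
        = ∑ i ∈ univ.filter (fun i => 0 < divergence f i), ∑ j, f i j * g i j :=
          sum_congr rfl fun i _ => sum_subset (filter_subset _ _) fun j _ hj => by
            rw [not_imp_comm.mp (hsupp i j) fun h => hj (mem_filter.mpr ⟨mem_univ j, h.2⟩),
              zero_mul]
      _ = flowCost g f :=
          sum_subset (filter_subset _ _) fun i _ hi => sum_eq_zero fun j _ => by
            rw [not_imp_comm.mp (hsupp i j) fun h => hi (mem_filter.mpr ⟨mem_univ i, h.1⟩),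
              zero_mul]

variable [DecidableEq ι]

/-- Forwards the flow entering `b` straight to the targets of `b`, in proportion to the flow
leaving `b`; of the flow leaving `b` only the excess over the flow entering it remains. When
`inflow f b ≤ outflow f b` and only the loop leaves `b`, the divisions are `x / 0 = 0` and this
merely deletes the loop. -/
noncomputable def bypass (f : ι → ι → ℝ) (b x y : ι) : ℝ :=
  if y = b then 0
  else if x = b then (1 - (inflow f b - f b b) / (outflow f b - f b b)) * f b y
  else f x y + f x b * f b y / (outflow f b - f b b)

lemma sum_ite_eq_zero_eq_sum_erase (b : ι) (F : ι → ℝ) :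
    ∑ y, (if y = b then 0 else F y) = ∑ y ∈ univ.erase b, F y := by
  rw [sum_ite, filter_ne', filter_eq']
  simp

lemma outflow_sub_self (f : ι → ι → ℝ) (b : ι) :
    outflow f b - f b b = ∑ y ∈ univ.erase b, f b y :=
  (sum_erase_eq_sub (mem_univ b)).symm

lemma inflow_sub_self (f : ι → ι → ℝ) (b : ι) :
    inflow f b - f b b = ∑ x ∈ univ.erase b, f x b :=
  (sum_erase_eq_sub (mem_univ b)).symm

lemma outflow_sub_self_nonneg (hf : ∀ x y, 0 ≤ f x y) : 0 ≤ outflow f b - f b b :=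
  outflow_sub_self f b ▸ sum_nonneg fun y _ => hf b y

lemma bypass_nonneg (hf : ∀ x y, 0 ≤ f x y) (hb : inflow f b ≤ outflow f b) (x y : ι) :
    0 ≤ bypass f b x y := by
  have hO := outflow_sub_self_nonneg (b := b) hf
  unfold bypass
  split_ifs
  · exact le_rfl
  · exact mul_nonneg (sub_nonneg.mpr (div_le_one_of_le₀ (by linarith) hO)) (hf b y)
  · exact add_nonneg (hf x y) (div_nonneg (mul_nonneg (hf x b) (hf b y)) hO)

lemma inflow_bypass_self : inflow (bypass f b) b = 0 := by
  simp [inflow, bypass]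

lemma apply_div_outflow_sub_self_mul (hf : ∀ x y, 0 ≤ f x y) (hb : inflow f b ≤ outflow f b)
    {x : ι} (hx : x ≠ b) : f x b / (outflow f b - f b b) * (outflow f b - f b b) = f x b := by
  have hxb : f x b ≤ inflow f b - f b b :=
    inflow_sub_self f b ▸ single_le_sum (fun x _ => hf x b) (mem_erase.2 ⟨hx, mem_univ x⟩)
  exact div_mul_cancel_of_imp fun h => by linarith [hf x b]

lemma outflow_bypass_of_ne (hf : ∀ x y, 0 ≤ f x y) (hb : inflow f b ≤ outflow f b) {x : ι}
    (hx : x ≠ b) : outflow (bypass f b) x = outflow f x := by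
  have hcancel := apply_div_outflow_sub_self_mul hf hb hx
  calc outflow (bypass f b) x
      = ∑ y ∈ univ.erase b, (f x y + f x b * f b y / (outflow f b - f b b)) := by
        simp only [outflow, bypass, if_neg hx, sum_ite_eq_zero_eq_sum_erase]
    _ = outflow f x - f x b + f x b / (outflow f b - f b b) * (outflow f b - f b b) := by
        rw [sum_add_distrib, sum_erase_eq_sub (mem_univ b), outflow_sub_self f b, mul_sum]
        exact congrArg _ (sum_congr rfl fun _ _ => by ring)
    _ = outflow f x := by rw [hcancel]; ring

lemma inflow_bypass_of_ne {y : ι} (hy : y ≠ b) : inflow (bypass f b) y = inflow f y := by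
  show ∑ x, bypass f b x y = ∑ x, f x y
  simp only [bypass, if_neg hy]
  rw [← add_sum_erase _ _ (mem_univ b), if_pos rfl,
    sum_congr rfl fun x hx => if_neg (ne_of_mem_erase hx), sum_add_distrib, ← sum_div,
    ← sum_mul, ← inflow_sub_self, sum_erase_eq_sub (mem_univ b)]
  field_simp
  ring

lemma divergence_bypass_self (hf : ∀ x y, 0 ≤ f x y) (hb : inflow f b ≤ outflow f b) :
    divergence (bypass f b) b = divergence f b := by
  have hI : 0 ≤ inflow f b - f b b := inflow_sub_self f b ▸ sum_nonneg fun x _ => hf x b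
  have hcancel : (inflow f b - f b b) / (outflow f b - f b b) * (outflow f b - f b b) =
      inflow f b - f b b := div_mul_cancel_of_imp fun h => by linarith
  have hout : outflow (bypass f b) b =
      (1 - (inflow f b - f b b) / (outflow f b - f b b)) * (outflow f b - f b b) := by
    show ∑ y, bypass f b b y = _
    simp only [bypass, if_true, sum_ite_eq_zero_eq_sum_erase, ← mul_sum, ← outflow_sub_self]
  rw [divergence, divergence, hout, inflow_bypass_self, one_sub_mul, hcancel]
  ring

lemma sum_sum_eq_add_sum_erase (F : ι → ι → ℝ) (b : ι) :
    ∑ x, ∑ y, F x y = F b b + ∑ y ∈ univ.erase b, F b y +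
      ∑ x ∈ univ.erase b, (F x b + ∑ y ∈ univ.erase b, F x y) := by
  simp only [← add_sum_erase univ _ (mem_univ b)]

lemma bypass_apply_self (x : ι) : bypass f b x b = 0 := if_pos rfl

lemma bypass_self_apply {y : ι} (hy : y ≠ b) :
    bypass f b b y = (1 - (inflow f b - f b b) / (outflow f b - f b b)) * f b y := by
  simp [bypass, hy]

lemma bypass_apply {x y : ι} (hx : x ≠ b) (hy : y ≠ b) :
    bypass f b x y = f x y + f x b * f b y / (outflow f b - f b b) := by
  simp [bypass, hx, hy]

lemma sum_rerouted_cost_le (htri : ∀ x y, g x y ≤ g x b + g b y) (hf : ∀ x y, 0 ≤ f x y)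
    (hb : inflow f b ≤ outflow f b) :
    ∑ x ∈ univ.erase b, ∑ y ∈ univ.erase b, f x b * f b y / (outflow f b - f b b) * g x y ≤
      ∑ x ∈ univ.erase b, f x b * g x b +
        (inflow f b - f b b) / (outflow f b - f b b) * ∑ y ∈ univ.erase b, f b y * g b y := by
  set s := univ.erase b
  set O := outflow f b - f b b
  have hO : 0 ≤ O := outflow_sub_self_nonneg hf
  calc ∑ x ∈ s, ∑ y ∈ s, f x b * f b y / O * g x y
      ≤ ∑ x ∈ s, ∑ y ∈ s, f x b * f b y / O * (g x b + g b y) :=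
        sum_le_sum fun x _ => sum_le_sum fun y _ =>
          mul_le_mul_of_nonneg_left (htri x y) (div_nonneg (mul_nonneg (hf _ _) (hf _ _)) hO)
    _ = ∑ x ∈ s, f x b / O * (∑ y ∈ s, f b y) * g x b +
          (∑ x ∈ s, f x b) / O * ∑ y ∈ s, f b y * g b y := by
        simp only [mul_add, sum_add_distrib, sum_div, sum_mul, mul_sum]
        congr 1
        · exact sum_congr rfl fun x _ => sum_congr rfl fun y _ => by ring
        · rw [sum_comm]
          exact sum_congr rfl fun x _ => sum_congr rfl fun y _ => by ring
    _ = _ := by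
        rw [← outflow_sub_self, ← inflow_sub_self]
        congr 1
        exact sum_congr rfl fun x hx => by
          rw [apply_div_outflow_sub_self_mul hf hb (ne_of_mem_erase hx)]

lemma flowCost_bypass_le (htri : ∀ x y, g x y ≤ g x b + g b y)
    (hf : ∀ x y, 0 ≤ f x y) (hb : inflow f b ≤ outflow f b) :
    flowCost g (bypass f b) ≤ flowCost g f := by
  have hrerouted := sum_rerouted_cost_le htri hf hb
  have hloop : 0 ≤ f b b * g b b := mul_nonneg (hf b b) (by linarith [htri b b])
  set s := univ.erase b
  set O := outflow f b - f b b
  set I := inflow f b - f b b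
  set P := ∑ y ∈ s, f b y * g b y
  have hbypass : flowCost g (bypass f b) = ∑ y ∈ s, (1 - I / O) * f b y * g b y +
      ∑ x ∈ s, ∑ y ∈ s, (f x y * g x y + f x b * f b y / O * g x y) := by
    rw [flowCost, sum_sum_eq_add_sum_erase _ b]
    simp only [bypass_apply_self, zero_mul, zero_add]
    congr 1
    · exact sum_congr rfl fun y hy => by rw [bypass_self_apply (ne_of_mem_erase hy)]
    · refine sum_congr rfl fun x hx => sum_congr rfl fun y hy => ?_
      rw [bypass_apply (ne_of_mem_erase hx) (ne_of_mem_erase hy)]; ring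
  have hcost : flowCost g f =
      f b b * g b b + P + ∑ x ∈ s, (f x b * g x b + ∑ y ∈ s, f x y * g x y) :=
    sum_sum_eq_add_sum_erase _ b
  rw [hbypass, hcost]
  simp only [sum_add_distrib, mul_assoc, ← mul_sum]
  linarith

theorem exists_flow_isSourceOrSink_at (htri : ∀ x b y, g x y ≤ g x b + g b y)
    (hf : ∀ x y, 0 ≤ f x y) (b : ι) :
    ∃ f' : ι → ι → ℝ, (∀ x y, 0 ≤ f' x y) ∧ IsSourceOrSink f' b ∧
      (∀ v ≠ b, outflow f' v = outflow f v ∧ inflow f' v = inflow f v) ∧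
      divergence f' b = divergence f b ∧ flowCost g f' ≤ flowCost g f := by
  rcases le_total (inflow f b) (outflow f b) with hb | hb
  · exact ⟨bypass f b, bypass_nonneg hf hb, Or.inl inflow_bypass_self,
      fun v hv => ⟨outflow_bypass_of_ne hf hb hv, inflow_bypass_of_ne hv⟩,
      divergence_bypass_self hf hb, flowCost_bypass_le (fun x y => htri x b y) hf hb⟩
  · have hfT : ∀ x y, 0 ≤ f y x := fun x y => hf y x
    refine ⟨fun x y => bypass (fun x y => f y x) b y x, fun x y => bypass_nonneg hfT hb y x,
      Or.inr inflow_bypass_self,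
      fun v hv => ⟨inflow_bypass_of_ne hv, outflow_bypass_of_ne hfT hb hv⟩, ?_, ?_⟩
    · rw [divergence_transpose, Pi.neg_apply, divergence_bypass_self hfT hb,
        divergence_transpose, Pi.neg_apply, neg_neg]
    · exact (flowCost_transpose (fun x y => g y x) _).trans_le <|
        (flowCost_bypass_le (fun x y => (htri y b x).trans_eq (add_comm _ _)) hfT hb).trans_eq
          (flowCost_transpose g f)

theorem exists_flow_forall_isSourceOrSink (htri : ∀ x b y, g x y ≤ g x b + g b y)
    (hf : ∀ x y, 0 ≤ f x y) :
    ∃ f' : ι → ι → ℝ, (∀ x y, 0 ≤ f' x y) ∧ (∀ v, IsSourceOrSink f' v) ∧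
      divergence f' = divergence f ∧ flowCost g f' ≤ flowCost g f := by
  suffices ∀ s : Finset ι, ∃ f' : ι → ι → ℝ, (∀ x y, 0 ≤ f' x y) ∧
      (∀ v ∈ s, IsSourceOrSink f' v) ∧
      divergence f' = divergence f ∧ flowCost g f' ≤ flowCost g f by
    obtain ⟨f', hf', hv, hdiv, hcost⟩ := this univ
    exact ⟨f', hf', fun v => hv v (mem_univ v), hdiv, hcost⟩
  intro s
  induction s using Finset.induction_on with
  | empty => exact ⟨f, hf, by simp, rfl, le_rfl⟩
  | insert a s _ ih =>
    obtain ⟨f₁, hf₁, hv₁, hdiv₁, hcost₁⟩ := ih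
    obtain ⟨f₂, hf₂, hv₂, hsame, hdiv₂, hcost₂⟩ := exists_flow_isSourceOrSink_at htri hf₁ a
    refine ⟨f₂, hf₂, fun v hv => ?_, ?_, hcost₂.trans hcost₁⟩
    · rcases eq_or_ne v a with rfl | hva
      · exact hv₂
      · rw [IsSourceOrSink, (hsame v hva).1, (hsame v hva).2]
        exact hv₁ v ((mem_insert.mp hv).resolve_left hva)
    · rw [← hdiv₁]
      ext v
      rcases eq_or_ne v a with rfl | hva
      · exact hdiv₂
      · simp only [divergence, (hsame v hva).1, (hsame v hva).2]

theorem exists_isTransportPlan_planCost_le (htri : ∀ x b y, g x y ≤ g x b + g b y)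
    (hf : ∀ x y, 0 ≤ f x y) :
    ∃ l, IsTransportPlan (divergence f) l ∧ planCost (divergence f) g l ≤ flowCost g f := by
  obtain ⟨f', hf', hv, hdiv, hcost⟩ := exists_flow_forall_isSourceOrSink htri hf
  obtain ⟨hplan, hplanCost⟩ := isTransportPlan_of_forall_isSourceOrSink (g := g) hf' hv
  exact ⟨f', hdiv ▸ hplan, (hdiv ▸ hplanCost).trans_le hcost⟩

theorem transportCost_geodist_le_flowCost {m : ℕ} {w f : Fin m → Fin m → ℝ}
    (hw : ∀ i j, 0 ≤ w i j) (hf : ∀ i j, 0 ≤ f i j) :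
    transportCost (divergence f) (geodist w) ≤ flowCost w f := by
  obtain ⟨l, hl, hcost⟩ := exists_isTransportPlan_planCost_le (geodist_triangle hw) hf
  calc transportCost (divergence f) (geodist w)
      ≤ planCost (divergence f) (geodist w) l := transportCost_le_planCost (geodist_nonneg hw) hl
    _ ≤ flowCost (geodist w) f := hcost
    _ ≤ flowCost w f := flowCost_mono (geodist_le hw) hf

end Flow

lemma toReal_add_ofReal_mul {a b : ℝ≥0∞} (ha : a ≠ ⊤) (hb : b ≠ ⊤) {ε : ℝ} (hε : 0 ≤ ε) :
    (a + ENNReal.ofReal ε * b).toReal = a.toReal + ε * b.toReal := by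
  rw [ENNReal.toReal_add ha (ENNReal.mul_ne_top ENNReal.ofReal_ne_top hb), ENNReal.toReal_mul,
    ENNReal.toReal_ofReal hε]

section Measure

variable {X Y ι : Type*} [MeasurableSpace X] [MeasurableSpace Y] [Fintype ι] {μ : Measure X}

lemma sum_mul_measure_le_lintegral {S : ι → Set X} (hS : ∀ i, MeasurableSet (S i))
    (hdisj : Pairwise (Function.onFun Disjoint S)) {c : ι → ℝ≥0∞} {F : X → ℝ≥0∞}
    (hF : ∀ i, ∀ x ∈ S i, c i ≤ F x) : ∑ i, c i * μ (S i) ≤ ∫⁻ x, F x ∂μ :=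
  calc ∑ i, c i * μ (S i) = ∑ i, ∫⁻ _ in S i, c i ∂μ := by simp only [setLIntegral_const]
    _ ≤ ∑ i, ∫⁻ x in S i, F x ∂μ := sum_le_sum fun i _ => setLIntegral_mono' (hS i) (hF i)
    _ = ∫⁻ x in ⋃ i, S i, F x ∂μ := by rw [lintegral_iUnion hS hdisj, tsum_fintype]
    _ ≤ ∫⁻ x, F x ∂μ := setLIntegral_le_lintegral _ _

lemma sum_measure_inter_preimage {φ : X → Y} (hφ : Measurable φ) {S : Set X}
    (hS : MeasurableSet S) {B : ι → Set Y} (hB : ∀ j, MeasurableSet (B j))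
    (hdisj : Pairwise (Function.onFun Disjoint B)) (hnull : μ (φ ⁻¹' (⋃ j, B j)ᶜ) = 0) :
    ∑ j, μ (S ∩ φ ⁻¹' B j) = μ S := by
  have hdisj' : Pairwise (Function.onFun Disjoint fun j => S ∩ φ ⁻¹' B j) := fun i j hij =>
    (((hdisj hij).preimage φ).inter_left' S).inter_right' S
  rw [← tsum_fintype (L := .unconditional _), ← measure_iUnion hdisj' fun j => hS.inter (hφ (hB j)),
    ← Set.inter_iUnion, ← Set.preimage_iUnion,
    measure_inter_conull (by rwa [← Set.preimage_compl])]

end Measure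

section Coupling

variable {X ι : Type*} [MeasurableSpace X]

noncomputable def transferFlow (π : Measure (X × X)) (A : ι → Set X) (i j : ι) : ℝ :=
  (π (A i ×ˢ A j)).toReal

variable {π : Measure (X × X)} {A : ι → Set X}

lemma transferFlow_nonneg (i j : ι) : 0 ≤ transferFlow π A i j := ENNReal.toReal_nonneg

variable [Fintype ι] [IsFiniteMeasure π]

lemma outflow_transferFlow (hA : ∀ i, MeasurableSet (A i))
    (hdisj : Pairwise (Function.onFun Disjoint A)) (hnull : π (Prod.snd ⁻¹' (⋃ j, A j)ᶜ) = 0)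
    (i : ι) : outflow (transferFlow π A) i = (π (Prod.fst ⁻¹' A i)).toReal := by
  simp only [outflow, transferFlow]
  rw [← ENNReal.toReal_sum fun j _ => measure_ne_top _ _]
  exact congrArg _
    (sum_measure_inter_preimage measurable_snd (measurable_fst (hA i)) hA hdisj hnull)

lemma inflow_transferFlow (hA : ∀ i, MeasurableSet (A i))
    (hdisj : Pairwise (Function.onFun Disjoint A)) (hnull : π (Prod.fst ⁻¹' (⋃ j, A j)ᶜ) = 0)
    (j : ι) : inflow (transferFlow π A) j = (π (Prod.snd ⁻¹' A j)).toReal := by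
  simp only [inflow, transferFlow, Set.prod_eq, Set.inter_comm (Prod.fst ⁻¹' _)]
  rw [← ENNReal.toReal_sum fun j _ => measure_ne_top _ _]
  exact congrArg _
    (sum_measure_inter_preimage measurable_fst (measurable_snd (hA j)) hA hdisj hnull)

lemma divergence_transferFlow (hA : ∀ i, MeasurableSet (A i))
    (hdisj : Pairwise (Function.onFun Disjoint A)) (hfst : π (Prod.fst ⁻¹' (⋃ j, A j)ᶜ) = 0)
    (hsnd : π (Prod.snd ⁻¹' (⋃ j, A j)ᶜ) = 0) (i : ι) :
    divergence (transferFlow π A) i =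
      (π (Prod.fst ⁻¹' A i)).toReal - (π (Prod.snd ⁻¹' A i)).toReal := by
  rw [divergence, outflow_transferFlow hA hdisj hsnd, inflow_transferFlow hA hdisj hfst]

lemma ofReal_flowCost_transferFlow_le (hA : ∀ i, MeasurableSet (A i))
    (hdisj : Pairwise (Function.onFun Disjoint A)) {w : ι → ι → ℝ} (hw : ∀ i j, 0 ≤ w i j)
    {F : X × X → ℝ≥0∞} (hF : ∀ i j, ∀ z ∈ A i ×ˢ A j, ENNReal.ofReal (w i j) ≤ F z) :
    ENNReal.ofReal (flowCost w (transferFlow π A)) ≤ ∫⁻ z, F z ∂π := by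
  have hdisj₂ : Pairwise (Function.onFun Disjoint fun q : ι × ι => A q.1 ×ˢ A q.2) := by
    intro q q' hq
    by_cases h₁ : q.1 = q'.1
    · exact Set.disjoint_prod.mpr (Or.inr (hdisj fun h₂ => hq (Prod.ext h₁ h₂)))
    · exact Set.disjoint_prod.mpr (Or.inl (hdisj h₁))
  calc ENNReal.ofReal (flowCost w (transferFlow π A))
      = ∑ q : ι × ι, ENNReal.ofReal (w q.1 q.2) * π (A q.1 ×ˢ A q.2) := by
        rw [Fintype.sum_prod_type, flowCost, ENNReal.ofReal_sum_of_nonneg fun i _ =>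
          sum_nonneg fun j _ => mul_nonneg (transferFlow_nonneg i j) (hw i j)]
        refine sum_congr rfl fun i _ => ?_
        rw [ENNReal.ofReal_sum_of_nonneg fun j _ => mul_nonneg (transferFlow_nonneg i j) (hw i j)]
        refine sum_congr rfl fun j _ => ?_
        rw [transferFlow, ENNReal.ofReal_mul ENNReal.toReal_nonneg,
          ENNReal.ofReal_toReal (measure_ne_top _ _), mul_comm]
    _ ≤ ∫⁻ z, F z ∂π :=
        sum_mul_measure_le_lintegral (S := fun q : ι × ι => A q.1 ×ˢ A q.2)
          (c := fun q : ι × ι => ENNReal.ofReal (w q.1 q.2)) (fun q => (hA q.1).prod (hA q.2))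
          hdisj₂ fun q => hF q.1 q.2

end Coupling

section Wasserstein

variable {E : Type*} [PseudoMetricSpace E]

lemma setDist_nonneg (A B : Set E) : 0 ≤ setDist A B :=
  Real.sInf_nonneg (by rintro _ ⟨q, -, rfl⟩; exact dist_nonneg)

lemma setDist_le_dist {A B : Set E} {x y : E} (hx : x ∈ A) (hy : y ∈ B) :
    setDist A B ≤ dist x y :=
  csInf_le ⟨0, by rintro _ ⟨q, -, rfl⟩; exact dist_nonneg⟩ ⟨(x, y), ⟨hx, hy⟩, rfl⟩

variable [MeasurableSpace E]

theorem ofReal_mul_transportCost_le_WpCost {m : ℕ} {p : ℝ} (hp : 0 ≤ p) {A : Fin m → Set E}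
    (hA : ∀ i, MeasurableSet (A i)) (hdisj : Pairwise (Function.onFun Disjoint A))
    {μ νp νm : Measure E} [IsFiniteMeasure μ] [IsFiniteMeasure νp] [IsFiniteMeasure νm]
    (hμ : μ (⋃ i, A i)ᶜ = 0) (hνp : νp (⋃ i, A i)ᶜ = 0) (hνm : νm (⋃ i, A i)ᶜ = 0)
    {ε : ℝ} (hε : 0 < ε) :
    ENNReal.ofReal (ε * transportCost (fun i => (νp (A i)).toReal - (νm (A i)).toReal)
        (geodist fun i j => setDist (A i) (A j) ^ p)) ≤
      WpCost p (μ + ENNReal.ofReal ε • νp) (μ + ENNReal.ofReal ε • νm) := by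
  have hw : ∀ i j, 0 ≤ setDist (A i) (A j) ^ p := fun i j =>
    Real.rpow_nonneg (setDist_nonneg _ _) p
  have hU : MeasurableSet (⋃ i, A i)ᶜ := (MeasurableSet.iUnion hA).compl
  refine le_iInf₂ fun π ⟨h₁, h₂⟩ => ?_
  have hfst : ∀ s, MeasurableSet s → π (Prod.fst ⁻¹' s) = μ s + ENNReal.ofReal ε * νp s :=
    fun s hs => by rw [← Measure.map_apply measurable_fst hs, h₁]; rfl
  have hsnd : ∀ s, MeasurableSet s → π (Prod.snd ⁻¹' s) = μ s + ENNReal.ofReal ε * νm s :=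
    fun s hs => by rw [← Measure.map_apply measurable_snd hs, h₂]; rfl
  have : IsFiniteMeasure π := ⟨by
    rw [← Set.preimage_univ (f := Prod.fst), hfst _ MeasurableSet.univ]
    exact ENNReal.add_lt_top.2 ⟨measure_lt_top _ _,
      ENNReal.mul_lt_top ENNReal.ofReal_lt_top (measure_lt_top _ _)⟩⟩
  have hdiv : divergence (fun i j => transferFlow π A i j / ε) =
      fun i => (νp (A i)).toReal - (νm (A i)).toReal := by
    ext i
    have hfst₀ : π (Prod.fst ⁻¹' (⋃ j, A j)ᶜ) = 0 := by rw [hfst _ hU, hμ, hνp, mul_zero, add_zero]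
    have hsnd₀ : π (Prod.snd ⁻¹' (⋃ j, A j)ᶜ) = 0 := by rw [hsnd _ hU, hμ, hνm, mul_zero, add_zero]
    rw [divergence_div_const, divergence_transferFlow hA hdisj hfst₀ hsnd₀, hfst _ (hA i),
      hsnd _ (hA i), toReal_add_ofReal_mul (measure_ne_top _ _) (measure_ne_top _ _) hε.le,
      toReal_add_ofReal_mul (measure_ne_top _ _) (measure_ne_top _ _) hε.le]
    field_simp
    ring
  have hcost := transportCost_geodist_le_flowCost hw
    (fun i j => div_nonneg (transferFlow_nonneg (π := π) (A := A) i j) hε.le)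
  rw [hdiv, flowCost_div_const, le_div_iff₀ hε, mul_comm] at hcost
  exact (ENNReal.ofReal_le_ofReal hcost).trans <| ofReal_flowCost_transferFlow_le hA hdisj hw
    fun i j z hz => ENNReal.ofReal_le_ofReal <|
      Real.rpow_le_rpow (setDist_nonneg _ _) (setDist_le_dist hz.1 hz.2) hp

end Wasserstein

lemma ofReal_rpow_le_liminf_of_forall_ofReal_mul_le {a p : ℝ} (hp : 0 < p) {C : ℝ → ℝ≥0∞}
    (h : ∀ ε > 0, ENNReal.ofReal (ε * a) ≤ C ε) :
    ENNReal.ofReal a ^ (1 / p) ≤ Filter.liminf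
      (fun ε => ENNReal.ofReal ε ^ (-(1 / p)) * C ε ^ (1 / p)) (nhdsWithin 0 (Set.Ioi 0)) := by
  refine Filter.le_liminf_of_le (by isBoundedDefault)
    (eventually_mem_nhdsWithin.mono fun ε (hε : 0 < ε) => ?_)
  have hp' : 0 ≤ 1 / p := by positivity
  have hε₀ : ENNReal.ofReal ε ≠ 0 := (ENNReal.ofReal_pos.mpr hε).ne'
  calc ENNReal.ofReal a ^ (1 / p)
      = ENNReal.ofReal ε ^ (-(1 / p)) *
          (ENNReal.ofReal ε ^ (1 / p) * ENNReal.ofReal a ^ (1 / p)) := by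
        rw [← mul_assoc, ← ENNReal.rpow_add _ _ hε₀ ENNReal.ofReal_ne_top, neg_add_cancel,
          ENNReal.rpow_zero, one_mul]
    _ ≤ ENNReal.ofReal ε ^ (-(1 / p)) * C ε ^ (1 / p) := by
        rw [← ENNReal.mul_rpow_of_nonneg _ _ hp', ← ENNReal.ofReal_mul hε.le]
        exact mul_le_mul_right (ENNReal.rpow_le_rpow (h ε hε) hp') _

theorem teleportation_lower_bound_general {k : ℕ} (p : ℝ) (hp : 1 < p) (m : ℕ)
    (A : Fin m → Set (EuclideanSpace ℝ (Fin k)))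
    (hcpt : ∀ i, IsCompact (A i))
    (hdisj : Pairwise (Function.onFun Disjoint A))
    (μi : Fin m → Measure (EuclideanSpace ℝ (Fin k)))
    [∀ i, IsFiniteMeasure (μi i)] (hμsupp : ∀ i, μi i (A i)ᶜ = 0)
    (νp νm : Measure (EuclideanSpace ℝ (Fin k)))
    [IsFiniteMeasure νp] [IsFiniteMeasure νm]
    (hνp : νp (⋃ i, A i)ᶜ = 0) (hνm : νm (⋃ i, A i)ᶜ = 0)
    (nub : Fin m → ℝ) (hnub : ∀ i, nub i = (νp (A i)).toReal - (νm (A i)).toReal)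
    (w : Fin m → Fin m → ℝ) (hw : ∀ i j, w i j = setDist (A i) (A j) ^ p)
    (nuMu : ℝ)
    (hnuMu : nuMu = sInf {c : ℝ | ∃ lam : Fin m → Fin m → ℝ,
      (∀ i j, 0 ≤ lam i j) ∧
      (∀ i, 0 < nub i →
        ∑ j ∈ Finset.univ.filter (fun j => nub j < 0), lam i j = nub i) ∧
      (∀ j, nub j < 0 →
        ∑ i ∈ Finset.univ.filter (fun i => 0 < nub i), lam i j = -nub j) ∧
      c = ∑ i ∈ Finset.univ.filter (fun i => 0 < nub i),
            ∑ j ∈ Finset.univ.filter (fun j => nub j < 0),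
              lam i j * geodist w i j}) :
    ENNReal.ofReal nuMu ^ (1 / p) ≤
      Filter.liminf (fun ε : ℝ =>
        ENNReal.ofReal ε ^ (-(1 / p)) *
          Wp p ((∑ i, μi i) + ENNReal.ofReal ε • νp)
            ((∑ i, μi i) + ENNReal.ofReal ε • νm))
        (nhdsWithin 0 (Set.Ioi 0)) := by
  have hA : ∀ i, MeasurableSet (A i) := fun i => (hcpt i).isClosed.measurableSet
  have hμ : (∑ i, μi i) (⋃ i, A i)ᶜ = 0 := by
    rw [Measure.finsetSum_apply]
    exact sum_eq_zero fun i _ =>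
      measure_mono_null (Set.compl_subset_compl.mpr (Set.subset_iUnion A i)) (hμsupp i)
  have hν : nuMu = transportCost nub (geodist w) := by
    rw [hnuMu, transportCost]
    simp only [IsTransportPlan, planCost, and_assoc]
  obtain rfl : nub = fun i => (νp (A i)).toReal - (νm (A i)).toReal := funext hnub
  obtain rfl : w = fun i j => setDist (A i) (A j) ^ p := funext fun i => funext (hw i)
  unfold Wp
  exact ofReal_rpow_le_liminf_of_forall_ofReal_mul_le (by linarith) fun ε hε =>
    hν ▸ ofReal_mul_transportCost_le_WpCost (by linarith) hA hdisj hμ hνp hνm hε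

/-- Teleportation lower bound:
`liminf_{ε→0⁺} ε^{-1/p} W_p(μ+εν₊, μ+εν₋) ≥ ‖ν‖_μ^{1/p}`, where `‖ν‖_μ` is the optimal
transport cost of the charges `ν̄ᵢ = ν(Aᵢ)` on the graph of components with geodesic
distances induced by the edge weights `dist(Aᵢ,Aⱼ)^p`. -/
theorem teleportation_lower_bound {k : ℕ} (p : ℝ) (hp : 1 < p) (m : ℕ) (hm : 2 ≤ m)
    (A : Fin m → Set (EuclideanSpace ℝ (Fin k)))
    (hcpt : ∀ i, IsCompact (A i)) (hne : ∀ i, (A i).Nonempty)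
    (hdisj : Pairwise (Function.onFun Disjoint A))
    (μi : Fin m → Measure (EuclideanSpace ℝ (Fin k)))
    [∀ i, IsFiniteMeasure (μi i)] (hμsupp : ∀ i, μi i (A i)ᶜ = 0)
    (hμprob : (∑ i, μi i) Set.univ = 1)
    (νp νm : Measure (EuclideanSpace ℝ (Fin k)))
    [IsFiniteMeasure νp] [IsFiniteMeasure νm]
    (hνp : νp (⋃ i, A i)ᶜ = 0) (hνm : νm (⋃ i, A i)ᶜ = 0)
    (hbal : νp Set.univ = νm Set.univ)
    (nub : Fin m → ℝ) (hnub : ∀ i, nub i = (νp (A i)).toReal - (νm (A i)).toReal)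
    (w : Fin m → Fin m → ℝ) (hw : ∀ i j, w i j = setDist (A i) (A j) ^ p)
    (nuMu : ℝ)
    (hnuMu : nuMu = sInf {c : ℝ | ∃ lam : Fin m → Fin m → ℝ,
      (∀ i j, 0 ≤ lam i j) ∧
      (∀ i, 0 < nub i →
        ∑ j ∈ Finset.univ.filter (fun j => nub j < 0), lam i j = nub i) ∧
      (∀ j, nub j < 0 →
        ∑ i ∈ Finset.univ.filter (fun i => 0 < nub i), lam i j = -nub j) ∧
      c = ∑ i ∈ Finset.univ.filter (fun i => 0 < nub i),
            ∑ j ∈ Finset.univ.filter (fun j => nub j < 0),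
              lam i j * geodist w i j}) :
    ENNReal.ofReal nuMu ^ (1 / p) ≤
      Filter.liminf (fun ε : ℝ =>
        ENNReal.ofReal ε ^ (-(1 / p)) *
          Wp p ((∑ i, μi i) + ENNReal.ofReal ε • νp)
            ((∑ i, μi i) + ENNReal.ofReal ε • νm))
        (nhdsWithin 0 (Set.Ioi 0)) :=
  teleportation_lower_bound_general p hp m A hcpt hdisj μi hμsupp νp νm hνp hνm nub hnub w hw nuMu
    hnuMu
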